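/- Let A be a ring and T an A-module of projective dimension at most n admitting an exact sequence 0 → A → T⁰ → T¹ → ⋯ → Tⁿ → 0 with each Tⁱ a direct summand of a finite direct sum of copies of T. Then in the derived category D(A), the complex A (in degree 0) belongs to the smallest thick triangulated subcategory containing T. -/

import Mathlib

/-! Split the coresolution `0 → A → T⁰ → ⋯ → Tⁿ → 0` into short exact sequences
`0 → Kⁱ → Tⁱ → Kⁱ⁺¹ → 0`, where `Kⁱ = ker (Tⁱ → Tⁱ⁺¹)`, so that `K⁰ ≅ A` and `Kⁿ⁺¹ = 0`.
Each of them is a distinguished triangle in `D(A)`, and every `Tⁱ` is a direct summand of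
some `Tᵐ`, which lies in the thick closure of `T`. Descending induction on `i` then puts
every `Kⁱ`, in particular `A`, in that closure. -/

open CategoryTheory Limits Pretriangulated DerivedCategory

universe u

/-- A class of objects of a pretriangulated category is thick triangulated if it
is stable under shifts, cones, and direct summands (retracts). -/
def IsThickTriangulatedClass {T : Type*} [Category T] [HasZeroObject T] [Preadditive T]
    [HasShift T ℤ] [∀ n : ℤ, (shiftFunctor T n).Additive] [Pretriangulated T]
    (P : Set T) : Prop :=
  (∀ (X : T) (n : ℤ), X ∈ P → (X⟦n⟧ : T) ∈ P) ∧
  (∀ Tr : Triangle T, Tr ∈ (distTriang T) → Tr.obj₁ ∈ P → Tr.obj₂ ∈ P → Tr.obj₃ ∈ P) ∧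
  (∀ X Y : T, Y ∈ P → (∃ (r : X ⟶ Y) (s : Y ⟶ X), r ≫ s = 𝟙 X) → X ∈ P)

/-- Membership in the smallest thick triangulated subcategory containing `S`. -/
def memThickClosure {T : Type*} [Category T] [HasZeroObject T] [Preadditive T]
    [HasShift T ℤ] [∀ n : ℤ, (shiftFunctor T n).Additive] [Pretriangulated T]
    (S : Set T) (X : T) : Prop :=
  ∀ P : Set T, IsThickTriangulatedClass P → S ⊆ P → X ∈ P

namespace IsThickTriangulatedClass

variable {C : Type*} [Category C] [HasZeroObject C] [Preadditive C] [HasShift C ℤ]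
  [∀ n : ℤ, (shiftFunctor C n).Additive] [Pretriangulated C] {P : Set C}

lemma isStableUnderRetracts (hP : IsThickTriangulatedClass P) :
    ObjectProperty.IsStableUnderRetracts (· ∈ P) where
  of_retract r hY := hP.2.2 _ _ hY ⟨r.i, r.r, r.retract⟩

lemma isTriangulated (hP : IsThickTriangulatedClass P) (hne : P.Nonempty) :
    ObjectProperty.IsTriangulated (· ∈ P) :=
  have := hP.isStableUnderRetracts
  have : ObjectProperty.Nonempty (· ∈ P) := ⟨hne⟩
  have : ObjectProperty.IsStableUnderShift (· ∈ P) ℤ :=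
    ⟨fun a => ⟨fun X hX => hP.1 X a hX⟩⟩
  have : ObjectProperty.IsTriangulatedClosed₃ (· ∈ P) := .mk' hP.2.1
  { toIsTriangulatedClosed₂ := .of_isTriangulatedClosed₃ }

end IsThickTriangulatedClass

lemma CategoryTheory.ShortComplex.ShortExact.prop_singleFunctor_X₁
    {C : Type*} [Category C] [Abelian C] [HasDerivedCategory C]
    (P : ObjectProperty (DerivedCategory C)) [P.IsTriangulatedClosed₁]
    [P.IsClosedUnderIsomorphisms] {S : ShortComplex C} (hS : S.ShortExact)
    (h₂ : P ((singleFunctor C 0).obj S.X₂)) (h₃ : P ((singleFunctor C 0).obj S.X₃)) :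
    P ((singleFunctor C 0).obj S.X₁) :=
  P.ext_of_isTriangulatedClosed₁ _ hS.singleTriangle_distinguished h₂ h₃

lemma DerivedCategory.prop_singleFunctor_pi {A : Type u} [Ring A]
    [HasDerivedCategory (ModuleCat.{u} A)]
    (P : ObjectProperty (DerivedCategory (ModuleCat.{u} A))) [P.IsClosedUnderFiniteProducts]
    {ι : Type} [Finite ι] (M : ι → ModuleCat.{u} A)
    (hM : ∀ i, P ((singleFunctor _ 0).obj (M i))) :
    P ((singleFunctor _ 0).obj (ModuleCat.of A (∀ i, M i))) :=
  (P.inverseImage (singleFunctor _ 0)).prop_of_isLimit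
    (ModuleCat.HasLimit.productLimitCone.{0, u} M).isLimit fun j => hM j.as

namespace ModuleCat

variable {A : Type u} [Ring A]

def kerShortComplex {X Y Z : ModuleCat.{u} A} {f : X ⟶ Y} {g : Y ⟶ Z}
    (hfg : Function.Exact f g) : ShortComplex (ModuleCat.{u} A) :=
  ShortComplex.mk (ofHom (LinearMap.ker f.hom).subtype)
    (ofHom (f.hom.codRestrict (LinearMap.ker g.hom) fun x => hfg.apply_apply_eq_zero x))
    (by ext x; exact x.2)

lemma kerShortComplex_shortExact {X Y Z : ModuleCat.{u} A} {f : X ⟶ Y} {g : Y ⟶ Z}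
    (hfg : Function.Exact f g) : (kerShortComplex hfg).ShortExact := by
  refine .mk' ?_ ?_ ?_
  · rw [ShortComplex.moduleCat_exact_iff]
    intro x hx
    exact ⟨⟨x, congrArg Subtype.val hx⟩, rfl⟩
  · rw [mono_iff_injective]
    exact Subtype.val_injective
  · rw [epi_iff_surjective]
    rintro ⟨y, hy⟩
    obtain ⟨x, rfl⟩ := (hfg y).mp hy
    exact ⟨x, rfl⟩

lemma prop_ker_of_exact_of_eventually_isZero (R : ObjectProperty (ModuleCat.{u} A))
    [R.ContainsZero] [R.IsClosedUnderIsomorphisms]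
    (hR : ∀ S : ShortComplex (ModuleCat.{u} A), S.ShortExact → R S.X₂ → R S.X₃ → R S.X₁)
    {Q : ℕ → ModuleCat.{u} A} (δ : ∀ i, Q i ⟶ Q (i + 1))
    (hδ : ∀ i, Function.Exact (δ i) (δ (i + 1))) (hQ : ∀ i, R (Q i))
    {n : ℕ} (hQ_zero : ∀ i, n < i → IsZero (Q i)) (i : ℕ) :
    R (of A (LinearMap.ker (δ i).hom)) := by
  suffices ∀ d i, n < i + d → R (of A (LinearMap.ker (δ i).hom)) from this (n + 1) i (by omega)
  intro d
  induction d with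
  | zero =>
    intro i hi
    exact R.prop_of_isZero
      (@IsZero.of_mono _ _ _ _ _ _ (kerShortComplex_shortExact (hδ i)).mono_f (hQ_zero i hi))
  | succ d ih =>
    intro i hi
    exact hR _ (kerShortComplex_shortExact (hδ i)) (hQ i) (ih (i + 1) (by omega))

end ModuleCat

theorem mem_thickClosure_of_good_tilting_sequence_general
    (A : Type u) [Ring A] [HasDerivedCategory (ModuleCat.{u} A)]
    (n : ℕ) (T : ModuleCat.{u} A)
    (hseq : ∃ (P : ℕ → ModuleCat.{u} A) (ι : ModuleCat.of A A ⟶ P 0)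
        (δ : ∀ i : ℕ, P i ⟶ P (i + 1)),
      Function.Injective ι ∧
      Function.Exact ι (δ 0) ∧
      (∀ i : ℕ, Function.Exact (δ i) (δ (i + 1))) ∧
      (∀ i : ℕ, n < i → IsZero (P i)) ∧
      (∀ i : ℕ, i ≤ n → ∃ (m : ℕ) (s : P i ⟶ ModuleCat.of A (Fin m → T))
          (r : ModuleCat.of A (Fin m → T) ⟶ P i), s ≫ r = 𝟙 (P i))) :
    memThickClosure {(singleFunctor (ModuleCat.{u} A) 0).obj T}
      ((singleFunctor (ModuleCat.{u} A) 0).obj (ModuleCat.of A A)) := by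
  obtain ⟨Q, ι, δ, hι, hι_exact, hδ, hQ_zero, hQ_summand⟩ := hseq
  intro P hP hTP
  have hT : (singleFunctor _ 0).obj T ∈ P := hTP rfl
  have := hP.isStableUnderRetracts
  have := hP.isTriangulated ⟨_, hT⟩
  let R := ObjectProperty.inverseImage (· ∈ P) (singleFunctor (ModuleCat.{u} A) 0)
  have hQ (i : ℕ) : R (Q i) := by
    rcases le_or_gt i n with hi | hi
    · obtain ⟨m, s, r, hsr⟩ := hQ_summand i hi
      exact ObjectProperty.prop_of_retract (· ∈ P) (Retract.map ⟨s, r, hsr⟩ _)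
        (prop_singleFunctor_pi (· ∈ P) _ fun _ => hT)
    · exact R.prop_of_isZero (hQ_zero i hi)
  have hK := ModuleCat.prop_ker_of_exact_of_eventually_isZero R
    (fun _ hS => hS.prop_singleFunctor_X₁ (· ∈ P)) δ hδ hQ hQ_zero 0
  exact R.prop_of_iso ((LinearEquiv.ofInjective _ hι).trans
    (LinearEquiv.ofEq _ _ (LinearMap.exact_iff.mp hι_exact).symm)).toModuleIso.symm hK

/-- Let `A` be a ring and `T` an `A`-module of projective dimension at most `n`
(expressed by the vanishing of `Ext^i(T, M) = Hom_{D(A)}(T, M[i])` for `i > n`)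
which admits an exact sequence `0 → A → T⁰ → ⋯ → Tⁿ → 0` with each `Tⁱ` a
direct summand of a finite direct sum of copies of `T`. Then, in the derived
category `D(A)`, the module `A` belongs to the smallest thick triangulated
subcategory containing `T`. -/
theorem mem_thickClosure_of_good_tilting_sequence
    (A : Type u) [Ring A] [HasDerivedCategory (ModuleCat.{u} A)]
    (n : ℕ) (T : ModuleCat.{u} A)
    (hpd : ∀ (M : ModuleCat.{u} A) (i : ℤ), (n : ℤ) < i →
      ∀ g : (singleFunctor (ModuleCat.{u} A) 0).obj T ⟶
        (((singleFunctor (ModuleCat.{u} A) 0).obj M)⟦i⟧), g = 0)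
    (hseq : ∃ (P : ℕ → ModuleCat.{u} A) (ι : ModuleCat.of A A ⟶ P 0)
        (δ : ∀ i : ℕ, P i ⟶ P (i + 1)),
      Function.Injective ι ∧
      Function.Exact ι (δ 0) ∧
      (∀ i : ℕ, Function.Exact (δ i) (δ (i + 1))) ∧
      (∀ i : ℕ, n < i → IsZero (P i)) ∧
      (∀ i : ℕ, i ≤ n → ∃ (m : ℕ) (s : P i ⟶ ModuleCat.of A (Fin m → T))
          (r : ModuleCat.of A (Fin m → T) ⟶ P i), s ≫ r = 𝟙 (P i))) :
    memThickClosure {(singleFunctor (ModuleCat.{u} A) 0).obj T}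
      ((singleFunctor (ModuleCat.{u} A) 0).obj (ModuleCat.of A A)) :=
  mem_thickClosure_of_good_tilting_sequence_general A n T hseq
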